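/- With A, a = (a₁, a₂, a₃, a₄), v, and B_t as in the context: v₂ = v₄, each column of B_t sums to zero for every t, and for every integer t ≥ 0 one has B_t·(a + t·v)ᵀ = 0, i.e. the rows of B_t are relations of the translated sequence a + t·v. -/

import Mathlib

/-! The vectors `a` and `v` are generalized cross products of three rows: `v` of the rows of `V`,
and `-a` of the last three rows of `A`. Since the rows of `A` sum to zero, `a` is then the cross
product of the first three rows `A₀, A₁, A₂`. The cross product is linear in
each row, so `a + t v` is the cross product of `A₀, A₁ + t e, A₂` with `e = (0, -1, 0, 1)`, i.e. of
the first three rows of `B_t`. A cross product is orthogonal to the rows it is built from, and the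
last row of `B_t` is minus the sum of the other three, so `B_t (a + t v) = 0`. Orthogonality of
`v` to `e` is `v₂ = v₄`. -/

namespace Matrix

theorem submatrix_id_updateRow {α m k l : Type*} [DecidableEq m] (V : Matrix m k α) (i : m)
    (x : k → α) (f : l → k) :
    (V.updateRow i x).submatrix id f = (V.submatrix id f).updateRow i (x ∘ f) := by
  ext r c
  by_cases h : r = i <;> simp [updateRow_apply, h]

variable {R : Type*} [CommRing R] {n : ℕ}

/-- The generalized cross product of the `n` rows of `V`. -/
def crossVec (V : Matrix (Fin n) (Fin (n + 1)) R) : Fin (n + 1) → R :=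
  fun j => (-1) ^ (j : ℕ) * (V.submatrix id j.succAbove).det

theorem dotProduct_crossVec (x : Fin (n + 1) → R) (V : Matrix (Fin n) (Fin (n + 1)) R) :
    x ⬝ᵥ crossVec V = (of (vecCons x V)).det := by
  rw [det_succ_row_zero, dotProduct]
  refine Finset.sum_congr rfl fun j _ => ?_
  have hminor : (of (vecCons x V)).submatrix Fin.succ j.succAbove = V.submatrix id j.succAbove := by
    ext; rfl
  rw [crossVec, hminor]
  change _ = _ * x j * _
  ring

theorem mulVec_crossVec (V : Matrix (Fin n) (Fin (n + 1)) R) : V *ᵥ crossVec V = 0 := by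
  ext i
  change V i ⬝ᵥ crossVec V = 0
  rw [dotProduct_crossVec]
  exact det_zero_of_row_eq (Fin.succ_ne_zero i).symm rfl

theorem mulVec_crossVec_submatrix_castSucc_of_col_sum_eq_zero
    (M : Matrix (Fin (n + 1)) (Fin (n + 1)) R) (hM : ∀ j, ∑ i, M i j = 0) :
    M *ᵥ crossVec (M.submatrix Fin.castSucc id) = 0 := by
  set w := crossVec (M.submatrix Fin.castSucc id)
  have hrows : ∀ i, M (Fin.castSucc i) ⬝ᵥ w = 0 := congrFun (mulVec_crossVec _)
  have hlast : M (Fin.last n) = -∑ i : Fin n, M (Fin.castSucc i) := by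
    ext j
    have := hM j
    rw [Fin.sum_univ_castSucc] at this
    simp [eq_neg_of_add_eq_zero_right this]
  ext i
  refine Fin.lastCases ?_ hrows i
  change M (Fin.last n) ⬝ᵥ w = 0
  simp [hlast, neg_dotProduct, sum_dotProduct, hrows]

theorem crossVec_updateRow_add_smul (V : Matrix (Fin n) (Fin (n + 1)) R) (i : Fin n)
    (x y : Fin (n + 1) → R) (c : R) :
    crossVec (V.updateRow i (x + c • y)) =
      crossVec (V.updateRow i x) + c • crossVec (V.updateRow i y) := by
  ext j
  simp only [crossVec, submatrix_id_updateRow, Pi.add_apply, Pi.smul_apply, smul_eq_mul]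
  rw [show (x + c • y) ∘ j.succAbove = x ∘ j.succAbove + c • (y ∘ j.succAbove) from rfl,
    det_updateRow_add, det_updateRow_smul]
  ring

theorem crossVec_submatrix_succ_of_col_sum_eq_zero (M : Matrix (Fin 4) (Fin 4) R)
    (hM : ∀ j, ∑ i, M i j = 0) :
    crossVec (M.submatrix Fin.succ id) = -crossVec (M.submatrix Fin.castSucc id) := by
  have h3 : ∀ j, M 3 j = -(M 0 j + M 1 j + M 2 j) := fun j => by
    have hsum : M 0 j + M 1 j + M 2 j + M 3 j = 0 := by simpa [Fin.sum_univ_four] using hM j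
    linear_combination hsum
  -- `M₃ = -(M₀ + M₁ + M₂)`, and `(M₁, M₂, M₀)` is an even permutation of `(M₀, M₁, M₂)`.
  ext j
  fin_cases j <;>
    simp [crossVec, det_fin_three, Fin.succAbove, Fin.lt_def, h3] <;> ring

end Matrix

open Matrix

theorem stmt_7_general
    (c₁ c₂ c₃ c₄ d₁₃ d₁₄ d₂₁ d₂₄ d₃₁ d₃₂ d₄₂ d₄₃ : ℕ)
    (hcol₁ : c₁ = d₂₁ + d₃₁) (hcol₂ : c₂ = d₃₂ + d₄₂)
    (hcol₃ : c₃ = d₁₃ + d₄₃) (hcol₄ : c₄ = d₁₄ + d₂₄)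
    (A : Matrix (Fin 4) (Fin 4) ℤ)
    (hA : A = !![-(c₁ : ℤ), 0, (d₁₃ : ℤ), (d₁₄ : ℤ);
                 (d₂₁ : ℤ), -(c₂ : ℤ), 0, (d₂₄ : ℤ);
                 (d₃₁ : ℤ), (d₃₂ : ℤ), -(c₃ : ℤ), 0;
                 0, (d₄₂ : ℤ), (d₄₃ : ℤ), -(c₄ : ℤ)])
    (a : Fin 4 → ℤ)
    (ha : ∀ j : Fin 4, a j = (-1) ^ ((j : ℕ) + 1) *
        (A.submatrix (Fin.succAbove 0) (Fin.succAbove j)).det)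
    (V : Matrix (Fin 3) (Fin 4) ℤ)
    (hV : V = !![-(c₁ : ℤ), 0, (d₁₃ : ℤ), (d₁₄ : ℤ);
                 0, -1, 0, 1;
                 (d₃₁ : ℤ), (d₃₂ : ℤ), -(c₃ : ℤ), 0])
    (v : Fin 4 → ℤ)
    (hv : ∀ j : Fin 4, v j = (-1) ^ ((j : ℕ)) *
        (V.submatrix id (Fin.succAbove j)).det)
    (Bt : ℤ → Matrix (Fin 4) (Fin 4) ℤ)
    (hBt : ∀ t : ℤ, Bt t = !![-(c₁ : ℤ), 0, (d₁₃ : ℤ), (d₁₄ : ℤ);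
                 (d₂₁ : ℤ), -(c₂ : ℤ) - t, 0, (d₂₄ : ℤ) + t;
                 (d₃₁ : ℤ), (d₃₂ : ℤ), -(c₃ : ℤ), 0;
                 0, (d₄₂ : ℤ) + t, (d₄₃ : ℤ), -(c₄ : ℤ) - t])
    :
    v 1 = v 3 ∧
    (∀ t : ℤ, ∀ j : Fin 4, ∑ i : Fin 4, Bt t i j = 0) ∧
    (∀ t : ℤ, 0 ≤ t → (Bt t).mulVec (fun j => a j + t * v j) = 0) := by
  have hcolB : ∀ t j, ∑ i, Bt t i j = 0 := fun t j => by
    rw [hBt]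
    fin_cases j <;> simp [Fin.sum_univ_four, hcol₁, hcol₂, hcol₃, hcol₄] <;> ring
  have hB0 : Bt 0 = A := by rw [hBt, hA]; simp
  set W := A.submatrix Fin.castSucc id
  have hBW : ∀ t : ℤ, (Bt t).submatrix Fin.castSucc id = W.updateRow 1 (W 1 + t • V 1) :=
    fun t => by
      ext i j; fin_cases i <;> fin_cases j <;> simp [W, hA, hBt, hV, sub_eq_add_neg]
  have hVW : V = W.updateRow 1 (V 1) := by
    ext i j; fin_cases i <;> fin_cases j <;> simp [W, hA, hV]
  have hv' : v = crossVec V := funext hv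
  have ha' : a = crossVec W := by
    have hcolA : ∀ j, ∑ i, A i j = 0 := hB0 ▸ hcolB 0
    rw [← neg_neg (crossVec W), ← crossVec_submatrix_succ_of_col_sum_eq_zero A hcolA]
    funext j
    rw [ha j, Fin.succAbove_zero, pow_succ]
    simp [crossVec]
  have hshift : ∀ t : ℤ,
      (fun j => a j + t * v j) = crossVec ((Bt t).submatrix Fin.castSucc id) := fun t => by
      rw [hBW, crossVec_updateRow_add_smul, updateRow_eq_self, ← hVW, ← ha', ← hv']
      rfl
  refine ⟨?_, hcolB, fun t _ => ?_⟩
  · have he := congrFun (mulVec_crossVec V) 1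
    rw [← hv'] at he
    simp [hV, mulVec, dotProduct, Fin.sum_univ_four] at he
    linarith
  · rw [hshift]
    exact mulVec_crossVec_submatrix_castSucc_of_col_sum_eq_zero _ (hcolB t)

/-- Properties of the translation vector `v` and the translated matrices `B_t`. -/
theorem stmt_7
    (c₁ c₂ c₃ c₄ d₁₃ d₁₄ d₂₁ d₂₄ d₃₁ d₃₂ d₄₂ d₄₃ : ℕ)
    (hc₁ : 2 ≤ c₁) (hc₂ : 2 ≤ c₂) (hc₃ : 2 ≤ c₃) (hc₄ : 2 ≤ c₄)
    (hd₁₃ : 0 < d₁₃) (hd₁₄ : 0 < d₁₄) (hd₂₁ : 0 < d₂₁) (hd₂₄ : 0 < d₂₄)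
    (hd₃₁ : 0 < d₃₁) (hd₃₂ : 0 < d₃₂) (hd₄₂ : 0 < d₄₂) (hd₄₃ : 0 < d₄₃)
    (hcol₁ : c₁ = d₂₁ + d₃₁) (hcol₂ : c₂ = d₃₂ + d₄₂)
    (hcol₃ : c₃ = d₁₃ + d₄₃) (hcol₄ : c₄ = d₁₄ + d₂₄)
    (A : Matrix (Fin 4) (Fin 4) ℤ)
    (hA : A = !![-(c₁ : ℤ), 0, (d₁₃ : ℤ), (d₁₄ : ℤ);
                 (d₂₁ : ℤ), -(c₂ : ℤ), 0, (d₂₄ : ℤ);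
                 (d₃₁ : ℤ), (d₃₂ : ℤ), -(c₃ : ℤ), 0;
                 0, (d₄₂ : ℤ), (d₄₃ : ℤ), -(c₄ : ℤ)])
    (a : Fin 4 → ℤ)
    (ha : ∀ j : Fin 4, a j = (-1) ^ ((j : ℕ) + 1) *
        (A.submatrix (Fin.succAbove 0) (Fin.succAbove j)).det)
    (V : Matrix (Fin 3) (Fin 4) ℤ)
    (hV : V = !![-(c₁ : ℤ), 0, (d₁₃ : ℤ), (d₁₄ : ℤ);
                 0, -1, 0, 1;
                 (d₃₁ : ℤ), (d₃₂ : ℤ), -(c₃ : ℤ), 0])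
    (v : Fin 4 → ℤ)
    (hv : ∀ j : Fin 4, v j = (-1) ^ ((j : ℕ)) *
        (V.submatrix id (Fin.succAbove j)).det)
    (Bt : ℤ → Matrix (Fin 4) (Fin 4) ℤ)
    (hBt : ∀ t : ℤ, Bt t = !![-(c₁ : ℤ), 0, (d₁₃ : ℤ), (d₁₄ : ℤ);
                 (d₂₁ : ℤ), -(c₂ : ℤ) - t, 0, (d₂₄ : ℤ) + t;
                 (d₃₁ : ℤ), (d₃₂ : ℤ), -(c₃ : ℤ), 0;
                 0, (d₄₂ : ℤ) + t, (d₄₃ : ℤ), -(c₄ : ℤ) - t])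
    :
    v 1 = v 3 ∧
    (∀ t : ℤ, ∀ j : Fin 4, ∑ i : Fin 4, Bt t i j = 0) ∧
    (∀ t : ℤ, 0 ≤ t → (Bt t).mulVec (fun j => a j + t * v j) = 0) :=
  stmt_7_general c₁ c₂ c₃ c₄ d₁₃ d₁₄ d₂₁ d₂₄ d₃₁ d₃₂ d₄₂ d₄₃ hcol₁ hcol₂ hcol₃ hcol₄ A hA a ha V hV
    v hv Bt hBt
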